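/- arXiv:1506.07019 — 3 statements merged into one kernel-verified Lean document; each statement's English description precedes it below -/
import Mathlib

section
/- Let Ω ⊆ ℂ be a domain and let d be a distance function on Ω that is continuous as a map Ω × Ω → ℝ with respect to the Euclidean topology and that is inner. Then the metric topology induced by d on Ω coincides with the Euclidean subspace topology on Ω: a set U ⊆ Ω is open for d if and only if it is open in the Euclidean subspace topology. -/
/-!
A `d`-ball is Euclidean-open because `d x ·` is continuous. Conversely, given a Euclidean
sphere around `x` inside `Ω`, `d x ·` attains a positive minimum `m` on it; any path from `x`
to a point `y` outside the sphere crosses it, so its `d`-length is at least `m`, and since `d`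
is inner, `d x y ≥ m`. Hence the `d`-ball of radius `m` lies inside the Euclidean ball.
-/

open Set Filter

/-- The `d`-length of the path `γ` restricted to `[0, T]`: the supremum, over all
partitions `0 = t₀ < t₁ < ⋯ < t_k = T`, of `Σ d(γ(t_{i-1}), γ(t_i))`. -/
noncomputable def dLength (d : ℂ → ℂ → ℝ) (γ : ℝ → ℂ) (T : ℝ) : ENNReal :=
  ⨆ (k : ℕ) (t : Fin (k + 1) → ℝ) (_ : StrictMono t) (_ : t 0 = 0)
    (_ : t (Fin.last k) = T),
    ENNReal.ofReal (∑ i : Fin k, d (γ (t i.castSucc)) (γ (t i.succ)))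

/-- `d` is a distance function on `Ω`. -/
def IsDistOn (Ω : Set ℂ) (d : ℂ → ℂ → ℝ) : Prop :=
  (∀ x ∈ Ω, ∀ y ∈ Ω, (d x y = 0 ↔ x = y)) ∧
  (∀ x ∈ Ω, ∀ y ∈ Ω, d x y = d y x) ∧
  (∀ x ∈ Ω, ∀ y ∈ Ω, ∀ z ∈ Ω, d x z ≤ d x y + d y z)

/-- `d` is an inner distance on `Ω`: `d x y` is the infimum of the `d`-lengths of
continuous paths in `Ω` from `x` to `y`. -/
def IsInnerOn (Ω : Set ℂ) (d : ℂ → ℂ → ℝ) : Prop :=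
  ∀ x ∈ Ω, ∀ y ∈ Ω,
    ENNReal.ofReal (d x y) =
      ⨅ (γ : ℝ → ℂ) (_ : ContinuousOn γ (Icc 0 1)) (_ : MapsTo γ (Icc 0 1) Ω)
        (_ : γ 0 = x) (_ : γ 1 = y), dLength d γ 1

open Metric Topology

lemma ofReal_add_le_dLength (d : ℂ → ℂ → ℝ) (γ : ℝ → ℂ) {t T : ℝ} (ht₀ : 0 < t) (htT : t < T) :
    ENNReal.ofReal (d (γ 0) (γ t) + d (γ t) (γ T)) ≤ dLength d γ T := by
  have hmono : StrictMono (![0, t, T] : Fin 3 → ℝ) := by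
    intro i j hij
    fin_cases i <;> fin_cases j <;> simp_all; linarith
  refine le_iSup_of_le 2 <| le_iSup_of_le ![0, t, T] <| le_iSup_of_le hmono <|
    le_iSup_of_le (by simp) <| le_iSup_of_le (by simp [Fin.last]) (le_of_eq ?_)
  simp [Fin.sum_univ_two]

lemma exists_mem_Ioo_mem_sphere {E : Type*} [PseudoMetricSpace E] {γ : ℝ → E}
    (hγ : ContinuousOn γ (Icc 0 1)) {x : E} {r : ℝ}
    (hr : 0 < r) (hγ₀ : γ 0 = x) (hγ₁ : r < dist (γ 1) x) :
    ∃ t ∈ Ioo (0 : ℝ) 1, γ t ∈ sphere x r := by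
  have hdist : ContinuousOn (fun t => dist (γ t) x) (Icc 0 1) :=
    (continuous_id.dist continuous_const).comp_continuousOn hγ
  obtain ⟨t, ht, htr⟩ := intermediate_value_Icc zero_le_one hdist
    (show r ∈ Icc (dist (γ 0) x) (dist (γ 1) x) by rw [hγ₀, dist_self]; exact ⟨hr.le, hγ₁.le⟩)
  refine ⟨t, ⟨ht.1.lt_of_ne ?_, ht.2.lt_of_ne ?_⟩, htr⟩
  · rintro rfl
    simp only [hγ₀, dist_self] at htr
    exact hr.ne htr
  · rintro rfl
    exact hγ₁.ne htr.symm

namespace IsDistOn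

variable {Ω : Set ℂ} {d : ℂ → ℂ → ℝ}

lemma self_eq_zero (hd : IsDistOn Ω d) {x : ℂ} (hx : x ∈ Ω) : d x x = 0 :=
  (hd.1 x hx x hx).2 rfl

lemma nonneg (hd : IsDistOn Ω d) {x y : ℂ} (hx : x ∈ Ω) (hy : y ∈ Ω) : 0 ≤ d x y := by
  have htri := hd.2.2 x hx y hy x hx
  rw [hd.self_eq_zero hx, hd.2.1 y hy x hx] at htri
  linarith

lemma pos (hd : IsDistOn Ω d) {x y : ℂ} (hx : x ∈ Ω) (hy : y ∈ Ω) (hxy : x ≠ y) : 0 < d x y :=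
  (hd.nonneg hx hy).lt_of_ne fun h => hxy ((hd.1 x hx y hy).1 h.symm)

end IsDistOn

section InnerDistance

variable {Ω : Set ℂ} {d : ℂ → ℂ → ℝ}

lemma ContinuousOn.curry_left (hcont : ContinuousOn (fun p : ℂ × ℂ => d p.1 p.2) (Ω ×ˢ Ω))
    {x : ℂ} (hx : x ∈ Ω) : ContinuousOn (d x) Ω :=
  hcont.comp (Continuous.prodMk_right x).continuousOn fun _ hy => ⟨hx, hy⟩

lemma isOpen_of_forall_dBall_subset (hΩ : IsOpen Ω) (hd : IsDistOn Ω d)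
    (hcont : ContinuousOn (fun p : ℂ × ℂ => d p.1 p.2) (Ω ×ˢ Ω)) {U : Set ℂ} (hUΩ : U ⊆ Ω)
    (hU : ∀ x ∈ U, ∃ ε > 0, ∀ y ∈ Ω, d x y < ε → y ∈ U) : IsOpen U := by
  refine isOpen_iff_forall_mem_open.2 fun x hx => ?_
  obtain ⟨ε, hε, hball⟩ := hU x hx
  refine ⟨Ω ∩ d x ⁻¹' Iio ε, fun y hy => hball y hy.1 hy.2,
    (hcont.curry_left (hUΩ hx)).isOpen_inter_preimage hΩ isOpen_Iio, hUΩ hx, ?_⟩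
  simpa [hd.self_eq_zero (hUΩ hx)] using hε

lemma IsInnerOn.exists_path_lt (hinner : IsInnerOn Ω d) (hd : IsDistOn Ω d) {x y : ℂ}
    (hx : x ∈ Ω) (hy : y ∈ Ω) {c : ℝ} (hxy : d x y < c) :
    ∃ γ : ℝ → ℂ, ContinuousOn γ (Icc 0 1) ∧ MapsTo γ (Icc 0 1) Ω ∧ γ 0 = x ∧ γ 1 = y ∧
      dLength d γ 1 < ENNReal.ofReal c := by
  have hlt := (ENNReal.ofReal_lt_ofReal_iff_of_nonneg (hd.nonneg hx hy)).2 hxy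
  rw [hinner x hx y hy] at hlt
  simpa only [iInf_lt_iff, exists_prop] using hlt

lemma IsInnerOn.le_of_forall_sphere (hinner : IsInnerOn Ω d) (hd : IsDistOn Ω d) {x y : ℂ}
    (hx : x ∈ Ω) (hy : y ∈ Ω) {r m : ℝ} (hr : 0 < r) (hyr : r < dist y x)
    (hm : ∀ z ∈ sphere x r ∩ Ω, m ≤ d x z) : m ≤ d x y := by
  by_contra! hlt
  obtain ⟨γ, hγc, hγΩ, hγ₀, hγ₁, hγlen⟩ := hinner.exists_path_lt hd hx hy hlt
  obtain ⟨t, ht, hγt⟩ := exists_mem_Ioo_mem_sphere hγc hr hγ₀ (hγ₁ ▸ hyr)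
  have hγtΩ : γ t ∈ Ω := hγΩ (Ioo_subset_Icc_self ht)
  have hlen : ENNReal.ofReal m ≤ dLength d γ 1 :=
    calc ENNReal.ofReal m ≤ ENNReal.ofReal (d (γ 0) (γ t) + d (γ t) (γ 1)) := by
          refine ENNReal.ofReal_le_ofReal ?_
          rw [hγ₀, hγ₁]
          linarith [hm _ ⟨hγt, hγtΩ⟩, hd.nonneg hγtΩ hy]
      _ ≤ dLength d γ 1 := ofReal_add_le_dLength d γ ht.1 ht.2
  exact hγlen.not_ge hlen

lemma IsInnerOn.exists_dBall_subset_of_mem_nhds (hinner : IsInnerOn Ω d) (hΩ : IsOpen Ω)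
    (hd : IsDistOn Ω d) (hcont : ContinuousOn (fun p : ℂ × ℂ => d p.1 p.2) (Ω ×ˢ Ω)) {x : ℂ}
    (hx : x ∈ Ω) {N : Set ℂ} (hN : N ∈ 𝓝 x) : ∃ ε > 0, ∀ y ∈ Ω, d x y < ε → y ∈ N := by
  obtain ⟨r, hr, hball⟩ := nhds_basis_closedBall.mem_iff.1 (inter_mem hN (hΩ.mem_nhds hx))
  have hsphere : sphere x r ⊆ Ω := fun z hz => (hball (sphere_subset_closedBall hz)).2
  obtain ⟨z, hz, hzmin⟩ := (isCompact_sphere x r).exists_isMinOn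
    (NormedSpace.sphere_nonempty.2 hr.le) ((hcont.curry_left hx).mono hsphere)
  have hzx : x ≠ z := by
    rintro rfl
    simp [hr.ne] at hz
  refine ⟨d x z, hd.pos hx (hsphere hz) hzx, fun y hy hyz => ?_⟩
  by_contra hyN
  have hyr : r < dist y x := not_le.1 fun h => hyN (hball h).1
  exact (hinner.le_of_forall_sphere hd hx hy hr hyr fun w hw => hzmin hw.1).not_gt hyz

end InnerDistance

theorem inner_distance_topology_general (Ω : Set ℂ) (hΩopen : IsOpen Ω)
    (d : ℂ → ℂ → ℝ) (hdist : IsDistOn Ω d)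
    (hcont : ContinuousOn (fun p : ℂ × ℂ => d p.1 p.2) (Ω ×ˢ Ω))
    (hinner : IsInnerOn Ω d) :
    ∀ U ⊆ Ω, ((∀ x ∈ U, ∃ ε > 0, ∀ y ∈ Ω, d x y < ε → y ∈ U) ↔
      ∃ V : Set ℂ, IsOpen V ∧ U = V ∩ Ω) := by
  intro U hUΩ
  constructor
  · intro hU
    exact ⟨U, isOpen_of_forall_dBall_subset hΩopen hdist hcont hUΩ hU,
      (inter_eq_left.2 hUΩ).symm⟩
  · rintro ⟨V, hV, rfl⟩ x hx
    exact hinner.exists_dBall_subset_of_mem_nhds hΩopen hdist hcont hx.2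
      ((hV.inter hΩopen).mem_nhds hx)

/-- A continuous inner distance on a domain `Ω ⊆ ℂ` induces the Euclidean subspace
topology on `Ω`: a subset `U ⊆ Ω` is `d`-open iff it is Euclidean-open in `Ω`. -/
theorem inner_distance_topology (Ω : Set ℂ) (hΩopen : IsOpen Ω)
    (hΩconn : IsConnected Ω) (d : ℂ → ℂ → ℝ) (hdist : IsDistOn Ω d)
    (hcont : ContinuousOn (fun p : ℂ × ℂ => d p.1 p.2) (Ω ×ˢ Ω))
    (hinner : IsInnerOn Ω d) :
    ∀ U ⊆ Ω, ((∀ x ∈ U, ∃ ε > 0, ∀ y ∈ Ω, d x y < ε → y ∈ U) ↔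
      ∃ V : Set ℂ, IsOpen V ∧ U = V ∩ Ω) :=
  inner_distance_topology_general Ω hΩopen d hdist hcont hinner
end

section
/- (Hopf–Rinow) Let Ω ⊆ ℂ be a domain and let d be a distance function on Ω that is continuous as a map Ω × Ω → ℝ with respect to the Euclidean topology and that is inner. Then (Ω, d) is a complete metric space (every d-Cauchy sequence converges in Ω) if and only if for every x ∈ Ω and every r > 0 the closed ball {y ∈ Ω : d(x,y) ≤ r} is compact. -/
open Set Filter

open Metric Topology

/-! Continuity and innerness of `d` make it induce the Euclidean topology on `Ω`, so `(Ω, d)` is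
a locally compact metric space. Innerness also gives, for `0 ≤ r < d x y`, points `z` with
`d x z = r` and `d z y` arbitrarily close to `d x y - r`: follow an almost shortest path from `x`
until `d x ·` reaches `r`. In such a space completeness forces every closed ball to be compact
(Hopf–Rinow–Cohn-Vossen); conversely, compact closed balls give completeness in any metric space.
-/

section AlmostGeodesic

/-- In a complete space this property characterises length spaces. -/
def HasAlmostGeodesicPoints (X : Type*) [PseudoMetricSpace X] : Prop :=
  ∀ p q : X, ∀ r, 0 ≤ r → r < dist p q → ∀ δ > 0,
    ∃ z, dist p z = r ∧ dist z q < dist p q - r + δ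

variable {X : Type*} [PseudoMetricSpace X]

lemma HasAlmostGeodesicPoints.exists_mem_closedBall_dist_lt (hgeod : HasAlmostGeodesicPoints X)
    {p q : X} {R η : ℝ} (hR : 0 ≤ R) (hη : 0 < η) (hq : q ∈ closedBall p (R + η)) :
    ∃ z ∈ closedBall p R, dist q z < 2 * η := by
  rw [mem_closedBall, dist_comm] at hq
  by_cases hqR : dist p q ≤ R
  · exact ⟨q, by rwa [mem_closedBall, dist_comm], by simpa using hη⟩
  obtain ⟨z, hpz, hzq⟩ := hgeod p q R hR (not_le.mp hqR) η hη
  refine ⟨z, by rw [mem_closedBall, dist_comm, hpz], ?_⟩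
  rw [dist_comm]
  linarith

lemma HasAlmostGeodesicPoints.isCompact_closedBall_of_forall_lt [CompleteSpace X]
    (hgeod : HasAlmostGeodesicPoints X) {p : X} {R : ℝ} (hR : 0 < R)
    (hlt : ∀ r < R, IsCompact (closedBall p r)) : IsCompact (closedBall p R) := by
  refine TotallyBounded.isCompact_of_isClosed ?_ isClosed_closedBall
  refine totallyBounded_iff.mpr fun ε hε => ?_
  set η := min (R / 2) (ε / 4)
  have hη : 0 < η := by positivity
  have hηR : η ≤ R / 2 := min_le_left _ _
  have hηε : η ≤ ε / 4 := min_le_right _ _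
  obtain ⟨t, htf, hcover⟩ :=
    totallyBounded_iff.mp (hlt (R - η) (by linarith)).totallyBounded (ε / 2) (half_pos hε)
  refine ⟨t, htf, fun q hq => ?_⟩
  obtain ⟨z, hz, hqz⟩ := hgeod.exists_mem_closedBall_dist_lt (by linarith) hη
    (by rwa [sub_add_cancel] : q ∈ closedBall p (R - η + η))
  obtain ⟨w, hw, hzw⟩ := mem_iUnion₂.mp (hcover hz)
  refine mem_iUnion₂.mpr ⟨w, hw, ?_⟩
  rw [mem_ball] at hzw ⊢
  linarith [dist_triangle q z w]

/-- The Hopf–Rinow–Cohn-Vossen argument: the supremum of the radii of compact balls about `p`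
cannot be finite, because a compact ball has a compact neighbourhood, which contains a larger
ball. -/
theorem HasAlmostGeodesicPoints.properSpace [CompleteSpace X] [LocallyCompactSpace X]
    (hgeod : HasAlmostGeodesicPoints X) :
    ProperSpace X := by
  refine ⟨fun p => ?_⟩
  by_contra! hnc
  set NC := {r : ℝ | ¬IsCompact (closedBall p r)}
  have hmono : ∀ {r₁ r₂ : ℝ}, r₁ ≤ r₂ → IsCompact (closedBall p r₂) →
      IsCompact (closedBall p r₁) := fun h hc =>
    hc.of_isClosed_subset isClosed_closedBall (closedBall_subset_closedBall h)
  obtain ⟨ρ, hρ, hρc⟩ := (isCompact_singleton (x := p)).exists_isCompact_cthickening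
  rw [cthickening_singleton p hρ.le] at hρc
  have hρNC : ∀ r ∈ NC, ρ ≤ r := fun r hr => le_of_not_gt fun hlt => hr (hmono hlt.le hρc)
  set R := sInf NC
  have hRpos : 0 < R := hρ.trans_le (le_csInf hnc hρNC)
  have hRc : IsCompact (closedBall p R) :=
    hgeod.isCompact_closedBall_of_forall_lt hRpos fun r hr => by
      by_contra hc
      exact hr.not_ge (csInf_le ⟨ρ, hρNC⟩ hc)
  obtain ⟨δ, hδ, hδc⟩ := hRc.exists_isCompact_cthickening
  have hbig : closedBall p (R + δ / 2) ⊆ cthickening δ (closedBall p R) := fun q hq => by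
    obtain ⟨z, hz, hqz⟩ := hgeod.exists_mem_closedBall_dist_lt hRpos.le (half_pos hδ) hq
    exact mem_cthickening_of_dist_le q z δ _ hz (by linarith)
  obtain ⟨r, hrNC, hrR⟩ := exists_lt_of_csInf_lt hnc (by linarith : R < R + δ / 2)
  exact hrNC (hmono hrR.le (hδc.of_isClosed_subset isClosed_closedBall hbig))

end AlmostGeodesic

lemma add_lt_of_dLength_lt (d : ℂ → ℂ → ℝ) (γ : ℝ → ℂ) {s c : ℝ} (hs : s ∈ Ioo 0 1)
    (hγ : dLength d γ 1 < ENNReal.ofReal c) : d (γ 0) (γ s) + d (γ s) (γ 1) < c := by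
  have hmono : StrictMono ![(0 : ℝ), s, 1] := by
    refine Fin.strictMono_iff_lt_succ.mpr fun i => ?_
    fin_cases i
    exacts [hs.1, hs.2]
  have hpart : ENNReal.ofReal (d (γ 0) (γ s) + d (γ s) (γ 1)) ≤ dLength d γ 1 := by
    refine le_iSup_of_le 2 <| le_iSup_of_le ![0, s, 1] <| le_iSup_of_le hmono <|
      le_iSup_of_le rfl <| le_iSup_of_le rfl (le_of_eq ?_)
    simp [Fin.sum_univ_two]
  exact (ENNReal.ofReal_lt_ofReal_iff'.mp (hpart.trans_lt hγ)).1

section DistOn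

variable {Ω : Set ℂ} {d : ℂ → ℂ → ℝ} {x y : ℂ}

lemma IsDistOn.self_eq_zero_s7 (hdist : IsDistOn Ω d) (hx : x ∈ Ω) : d x x = 0 :=
  (hdist.1 x hx x hx).mpr rfl

lemma IsDistOn.nonneg_s7 (hdist : IsDistOn Ω d) (hx : x ∈ Ω) (hy : y ∈ Ω) : 0 ≤ d x y := by
  have := hdist.2.2 x hx y hy x hx
  rw [hdist.self_eq_zero_s7 hx, hdist.2.1 y hy x hx] at this
  linarith

lemma continuousOn_d_left (hcont : ContinuousOn (fun p : ℂ × ℂ => d p.1 p.2) (Ω ×ˢ Ω))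
    (hx : x ∈ Ω) : ContinuousOn (d x) Ω :=
  hcont.comp (Continuous.prodMk_right x).continuousOn fun _ hy => ⟨hx, hy⟩

lemma IsInnerOn.exists_path_dLength_lt (hinner : IsInnerOn Ω d) (hx : x ∈ Ω) (hy : y ∈ Ω)
    {c : ENNReal} (hc : ENNReal.ofReal (d x y) < c) :
    ∃ γ : ℝ → ℂ, ContinuousOn γ (Icc 0 1) ∧ MapsTo γ (Icc 0 1) Ω ∧ γ 0 = x ∧ γ 1 = y ∧
      dLength d γ 1 < c := by
  rw [hinner x hx y hy] at hc
  simpa only [iInf_lt_iff, exists_prop] using hc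

lemma IsInnerOn.exists_pos_dist_le_of_d_lt (hdist : IsDistOn Ω d)
    (hcont : ContinuousOn (fun p : ℂ × ℂ => d p.1 p.2) (Ω ×ˢ Ω)) (hinner : IsInnerOn Ω d)
    (hx : x ∈ Ω) {ε : ℝ} (hε : 0 < ε) (hsph : sphere x ε ⊆ Ω) :
    ∃ δ > 0, ∀ y ∈ Ω, d x y < δ → dist x y ≤ ε := by
  obtain ⟨b, hb, hmin⟩ := (isCompact_sphere x ε).exists_isMinOn
    (NormedSpace.sphere_nonempty.mpr hε.le) ((continuousOn_d_left hcont hx).mono hsph)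
  have hb0 : 0 < d x b := by
    refine (hdist.nonneg_s7 hx (hsph hb)).lt_of_ne fun h => hε.ne ?_
    rwa [mem_sphere, ← (hdist.1 x hx b (hsph hb)).mp h.symm, dist_self] at hb
  -- A path from `x` to a point beyond the sphere crosses it, so its length is at least `d x b`.
  refine ⟨d x b, hb0, fun y hy hxy => ?_⟩
  by_contra! hfar
  obtain ⟨γ, hγc, hγΩ, hγ0, hγ1, hγ⟩ :=
    hinner.exists_path_dLength_lt hx hy ((ENNReal.ofReal_lt_ofReal_iff hb0).mpr hxy)
  obtain ⟨s, hs, hsε⟩ := intermediate_value_Ioo zero_le_one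
    ((continuous_const.dist continuous_id).comp_continuousOn hγc)
    (show ε ∈ Ioo (dist x (γ 0)) (dist x (γ 1)) by rw [hγ0, hγ1, dist_self]; exact ⟨hε, hfar⟩)
  have hlen := add_lt_of_dLength_lt d γ hs hγ
  rw [hγ0, hγ1] at hlen
  have hbs : d x b ≤ d x (γ s) := hmin (by rwa [mem_sphere, dist_comm])
  linarith [hdist.nonneg_s7 (hγΩ (Ioo_subset_Icc_self hs)) hy]

lemma IsInnerOn.exists_d_eq_of_lt (hdist : IsDistOn Ω d)
    (hcont : ContinuousOn (fun p : ℂ × ℂ => d p.1 p.2) (Ω ×ˢ Ω)) (hinner : IsInnerOn Ω d)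
    (hx : x ∈ Ω) (hy : y ∈ Ω) {r δ : ℝ} (hr : 0 ≤ r) (hrxy : r < d x y) (hδ : 0 < δ) :
    ∃ z ∈ Ω, d x z = r ∧ d z y < d x y - r + δ := by
  rcases hr.eq_or_lt with rfl | hr
  · exact ⟨x, hx, hdist.self_eq_zero_s7 hx, by linarith⟩
  obtain ⟨γ, hγc, hγΩ, hγ0, hγ1, hγ⟩ := hinner.exists_path_dLength_lt hx hy
    ((ENNReal.ofReal_lt_ofReal_iff (by linarith)).mpr (lt_add_of_pos_right (d x y) hδ))
  obtain ⟨s, hs, hsr⟩ := intermediate_value_Ioo zero_le_one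
    ((continuousOn_d_left hcont hx).comp hγc hγΩ)
    (show r ∈ Ioo (d x (γ 0)) (d x (γ 1)) by
      rw [hγ0, hγ1, hdist.self_eq_zero_s7 hx]; exact ⟨hr, hrxy⟩)
  have hlen := add_lt_of_dLength_lt d γ hs hγ
  rw [hγ0, hγ1] at hlen
  exact ⟨γ s, hγΩ (Ioo_subset_Icc_self hs), hsr, by linarith [show d x (γ s) = r from hsr]⟩

end DistOn

/-- The points of `Ω` as a type of their own, free of the Euclidean metric of `↥Ω`, so that the
metric `d` can be installed on it. -/
structure DomainPt (Ω : Set ℂ) : Type where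
  val : ℂ
  mem : val ∈ Ω

namespace DomainPt

variable {Ω : Set ℂ} {d : ℂ → ℂ → ℝ}

lemma val_injective : Function.Injective (val : DomainPt Ω → ℂ) := by
  rintro ⟨_, _⟩ ⟨_, _⟩ rfl
  rfl

lemma range_val : range (val : DomainPt Ω → ℂ) = Ω :=
  Set.ext fun w => ⟨fun ⟨p, hp⟩ => hp ▸ p.mem, fun hw => ⟨⟨w, hw⟩, rfl⟩⟩

lemma isOpen_induced_iff_forall_d_lt (hΩ : IsOpen Ω) (hdist : IsDistOn Ω d)
    (hcont : ContinuousOn (fun p : ℂ × ℂ => d p.1 p.2) (Ω ×ˢ Ω)) (hinner : IsInnerOn Ω d)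
    (s : Set (DomainPt Ω)) :
    IsOpen[TopologicalSpace.induced val inferInstance] s ↔
      ∀ p ∈ s, ∃ ε > 0, ∀ q : DomainPt Ω, d p.val q.val < ε → q ∈ s := by
  let : TopologicalSpace (DomainPt Ω) := .induced val inferInstance
  constructor
  · rintro hs p hp
    obtain ⟨U, hU, rfl⟩ := isOpen_induced_iff.mp hs
    obtain ⟨ε, hε, hball⟩ := Metric.isOpen_iff.mp (hU.inter hΩ) p.val ⟨hp, p.mem⟩
    obtain ⟨δ, hδ, hclose⟩ := hinner.exists_pos_dist_le_of_d_lt hdist hcont p.mem (half_pos hε)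
      ((sphere_subset_ball (half_lt_self hε)).trans (hball.trans inter_subset_right))
    refine ⟨δ, hδ, fun q hq => (hball ?_).1⟩
    rw [mem_ball, dist_comm]
    linarith [hclose q.val q.mem hq]
  · refine fun h => isOpen_iff_mem_nhds.mpr fun p hp => ?_
    obtain ⟨ε, hε, hball⟩ := h p hp
    have hd : Continuous fun q : DomainPt Ω => d p.val q.val :=
      (continuousOn_d_left hcont p.mem).comp_continuous continuous_induced_dom DomainPt.mem
    refine mem_of_superset ((isOpen_lt hd continuous_const).mem_nhds ?_) hball
    simpa [hdist.self_eq_zero_s7 p.mem] using hε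

/-- The metric `d` on `Ω`, whose topology is by construction the Euclidean one. -/
noncomputable abbrev pseudoMetricSpace (hΩ : IsOpen Ω) (hdist : IsDistOn Ω d)
    (hcont : ContinuousOn (fun p : ℂ × ℂ => d p.1 p.2) (Ω ×ˢ Ω)) (hinner : IsInnerOn Ω d) :
    PseudoMetricSpace (DomainPt Ω) :=
  letI : TopologicalSpace (DomainPt Ω) := .induced val inferInstance
  .ofDistTopology (fun p q => d p.val q.val) (fun p => hdist.self_eq_zero_s7 p.mem)
    (fun p q => hdist.2.1 _ p.mem _ q.mem) (fun p q r => hdist.2.2 _ p.mem _ q.mem _ r.mem)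
    (isOpen_induced_iff_forall_d_lt hΩ hdist hcont hinner)

section Metric

variable [PseudoMetricSpace (DomainPt Ω)]

lemma completeSpace_iff (hd : ∀ p q : DomainPt Ω, dist p q = d p.val q.val) :
    CompleteSpace (DomainPt Ω) ↔
      ∀ u : ℕ → ℂ, (∀ n, u n ∈ Ω) →
        (∀ ε > 0, ∃ N : ℕ, ∀ m ≥ N, ∀ n ≥ N, d (u m) (u n) < ε) →
        ∃ x ∈ Ω, ∀ ε > 0, ∃ N : ℕ, ∀ n ≥ N, d (u n) x < ε := by
  constructor
  · intro _ u hu hcauchy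
    obtain ⟨a, ha⟩ := cauchySeq_tendsto_of_complete (u := fun n => (⟨u n, hu n⟩ : DomainPt Ω))
      (Metric.cauchySeq_iff.mpr (by simpa only [hd] using hcauchy))
    exact ⟨a.val, a.mem, by simpa only [hd] using Metric.tendsto_atTop.mp ha⟩
  · refine fun h => Metric.complete_of_cauchySeq_tendsto fun u hu => ?_
    obtain ⟨x, hx, hlim⟩ := h (fun n => (u n).val) (fun n => (u n).mem)
      (by simpa only [hd] using Metric.cauchySeq_iff.mp hu)
    exact ⟨⟨x, hx⟩, Metric.tendsto_atTop.mpr (by simpa only [hd] using hlim)⟩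

lemma image_val_closedBall (hd : ∀ p q : DomainPt Ω, dist p q = d p.val q.val)
    (hsymm : ∀ x ∈ Ω, ∀ y ∈ Ω, d x y = d y x) (p : DomainPt Ω) (r : ℝ) :
    val '' closedBall p r = {y ∈ Ω | d p.val y ≤ r} := by
  ext y
  constructor
  · rintro ⟨q, hq, rfl⟩
    rw [mem_closedBall, hd, hsymm _ q.mem _ p.mem] at hq
    exact ⟨q.mem, hq⟩
  · rintro ⟨hy, hpy⟩
    refine ⟨⟨y, hy⟩, ?_, rfl⟩
    rwa [mem_closedBall, hd, hsymm _ hy _ p.mem]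

lemma properSpace_iff (hd : ∀ p q : DomainPt Ω, dist p q = d p.val q.val)
    (hsymm : ∀ x ∈ Ω, ∀ y ∈ Ω, d x y = d y x) (hval : IsEmbedding (val : DomainPt Ω → ℂ)) :
    ProperSpace (DomainPt Ω) ↔ ∀ x ∈ Ω, ∀ r > (0:ℝ), IsCompact {y ∈ Ω | d x y ≤ r} := by
  constructor
  · intro _ x hx r _
    simpa only [image_val_closedBall hd hsymm ⟨x, hx⟩] using
      (isCompact_closedBall (⟨x, hx⟩ : DomainPt Ω) r).image hval.continuous
  · refine fun h => .of_isCompact_closedBall_of_le 1 fun p r hr => ?_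
    rw [hval.isCompact_iff, image_val_closedBall hd hsymm]
    exact h p.val p.mem r (by linarith)

lemma hasAlmostGeodesicPoints (hd : ∀ p q : DomainPt Ω, dist p q = d p.val q.val)
    (hdist : IsDistOn Ω d) (hcont : ContinuousOn (fun p : ℂ × ℂ => d p.1 p.2) (Ω ×ˢ Ω))
    (hinner : IsInnerOn Ω d) : HasAlmostGeodesicPoints (DomainPt Ω) := by
  intro p q r hr hrpq δ hδ
  rw [hd] at hrpq
  obtain ⟨z, hz, hpz, hzq⟩ := hinner.exists_d_eq_of_lt hdist hcont p.mem q.mem hr hrpq hδ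
  exact ⟨⟨z, hz⟩, by rwa [hd], by simpa only [hd] using hzq⟩

end Metric

end DomainPt

theorem hopf_rinow_general (Ω : Set ℂ) (hΩopen : IsOpen Ω)
    (d : ℂ → ℂ → ℝ) (hdist : IsDistOn Ω d)
    (hcont : ContinuousOn (fun p : ℂ × ℂ => d p.1 p.2) (Ω ×ˢ Ω))
    (hinner : IsInnerOn Ω d) :
    (∀ u : ℕ → ℂ, (∀ n, u n ∈ Ω) →
        (∀ ε > 0, ∃ N : ℕ, ∀ m ≥ N, ∀ n ≥ N, d (u m) (u n) < ε) →
        ∃ x ∈ Ω, ∀ ε > 0, ∃ N : ℕ, ∀ n ≥ N, d (u n) x < ε) ↔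
      (∀ x ∈ Ω, ∀ r > (0:ℝ), IsCompact {y ∈ Ω | d x y ≤ r}) := by
  let := DomainPt.pseudoMetricSpace hΩopen hdist hcont hinner
  have hd : ∀ p q : DomainPt Ω, dist p q = d p.val q.val := fun _ _ => rfl
  have hval : IsOpenEmbedding (DomainPt.val : DomainPt Ω → ℂ) :=
    ⟨⟨⟨rfl⟩, DomainPt.val_injective⟩, DomainPt.range_val ▸ hΩopen⟩
  have := hval.locallyCompactSpace
  rw [← DomainPt.completeSpace_iff hd, ← DomainPt.properSpace_iff hd hdist.2.1 hval.isEmbedding]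
  exact ⟨fun _ => (DomainPt.hasAlmostGeodesicPoints hd hdist hcont hinner).properSpace,
    fun _ => inferInstance⟩

/-- **Hopf–Rinow.** For a continuous inner distance `d` on a domain `Ω ⊆ ℂ`, the metric
space `(Ω, d)` is complete iff every closed `d`-ball `{y ∈ Ω : d x y ≤ r}` is compact. -/
theorem hopf_rinow (Ω : Set ℂ) (hΩopen : IsOpen Ω)
    (hΩconn : IsConnected Ω) (d : ℂ → ℂ → ℝ) (hdist : IsDistOn Ω d)
    (hcont : ContinuousOn (fun p : ℂ × ℂ => d p.1 p.2) (Ω ×ˢ Ω))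
    (hinner : IsInnerOn Ω d) :
    (∀ u : ℕ → ℂ, (∀ n, u n ∈ Ω) →
        (∀ ε > 0, ∃ N : ℕ, ∀ m ≥ N, ∀ n ≥ N, d (u m) (u n) < ε) →
        ∃ x ∈ Ω, ∀ ε > 0, ∃ N : ℕ, ∀ n ≥ N, d (u n) x < ε) ↔
      (∀ x ∈ Ω, ∀ r > (0:ℝ), IsCompact {y ∈ Ω | d x y ≤ r}) :=
  hopf_rinow_general Ω hΩopen d hdist hcont hinner
end

section
/- (Landau's theorem, with bound 1/2) Let f : ℂ → ℂ be continuous on the closed unit disc {z : |z| ≤ 1} and holomorphic on 𝔻, with |f'(0)| = 1. Then for every R with 0 < R < 1/2 there exists z₀ ∈ ℂ such that {w ∈ ℂ : |w − z₀| < R} ⊆ f(𝔻). -/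
/-!
Ahlfors' method. If every disc of radius `R` meets the closed set `K = ℂ \ f(𝔻)`, pull back to
`𝔻`, along `h(z) = f(s z)` with `2R < s < 1`, the "metric" `λ(d(w, K)) |dw|`, where `λ(t)` is the
hyperbolic density of the punctured disc of radius `eR` at distance `t` from the puncture. The
ratio `F(z) = λ(d(h z, K)) |h'(z)| (1 - |z|²)` of this pull-back to the Poincaré metric vanishes on
the unit circle, so it has an interior maximum point `z₀`. Near `z₀`, `F` dominates the same ratio
for the punctured disc centred at a point of `K` nearest to `h z₀`, with equality at `z₀`. That
ratio is the hyperbolic derivative of a local lift of `h` to `𝔻`, and a hyperbolic derivative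
can only have local maxima `≤ 1` (by the maximum principle applied to the derivative after a
Möbius normalisation). Hence `F ≤ 1`, while `F(0) ≥ |h'(0)| / (2R) = s / (2R) > 1`.
-/

open Complex Metric Set Filter Topology
open scoped ComplexConjugate

noncomputable def hyperbolicDeriv (φ : ℂ → ℂ) (z : ℂ) : ℝ :=
  ‖deriv φ z‖ * (1 - ‖z‖ ^ 2) / (1 - ‖φ z‖ ^ 2)

lemma hyperbolicDeriv_comp {φ ψ : ℂ → ℂ} {z : ℂ} (hψ : DifferentiableAt ℂ ψ (φ z))
    (hφ : DifferentiableAt ℂ φ z) (hφz : ‖φ z‖ ≠ 1) :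
    hyperbolicDeriv (ψ ∘ φ) z = hyperbolicDeriv ψ (φ z) * hyperbolicDeriv φ z := by
  have : 1 - ‖φ z‖ ^ 2 ≠ 0 := by
    rw [show 1 - ‖φ z‖ ^ 2 = (1 - ‖φ z‖) * (1 + ‖φ z‖) by ring]
    exact mul_ne_zero (sub_ne_zero.mpr hφz.symm) (by positivity)
  simp only [hyperbolicDeriv, deriv_comp z hψ hφ, norm_mul, Function.comp_apply]
  field_simp

noncomputable def blaschkeFactor (a z : ℂ) : ℂ := (z - a) / (1 - conj a * z)

lemma one_sub_conj_mul_ne_zero {a z : ℂ} (ha : ‖a‖ < 1) (hz : ‖z‖ ≤ 1) :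
    1 - conj a * z ≠ 0 := by
  have : ‖conj a * z‖ < 1 := by
    rw [norm_mul, RCLike.norm_conj]
    nlinarith [norm_nonneg a, norm_nonneg z]
  intro h
  rw [← sub_eq_zero.mp h, norm_one] at this
  exact this.false

lemma one_sub_sq_norm_blaschkeFactor {a z : ℂ} (h : 1 - conj a * z ≠ 0) :
    1 - ‖blaschkeFactor a z‖ ^ 2 = (1 - ‖a‖ ^ 2) * (1 - ‖z‖ ^ 2) / ‖1 - conj a * z‖ ^ 2 := by
  have hpos : ‖1 - conj a * z‖ ^ 2 ≠ 0 := by positivity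
  rw [blaschkeFactor, norm_div, div_pow, eq_div_iff hpos, sub_mul, div_mul_cancel₀ _ hpos]
  simp only [Complex.sq_norm, normSq_apply, mul_re, mul_im, sub_re, sub_im, one_re, one_im,
    conj_re, conj_im]
  ring

lemma hasDerivAt_blaschkeFactor {a z : ℂ} (h : 1 - conj a * z ≠ 0) :
    HasDerivAt (blaschkeFactor a) (((1 - ‖a‖ ^ 2 : ℝ) : ℂ) / (1 - conj a * z) ^ 2) z := by
  have hnum : HasDerivAt (fun w : ℂ => w - a) 1 z := (hasDerivAt_id z).sub_const a
  have hden : HasDerivAt (fun w : ℂ => 1 - conj a * w) (-conj a) z := by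
    simpa using ((hasDerivAt_id z).const_mul (conj a)).const_sub 1
  refine (hnum.div hden h).congr_deriv ?_
  push_cast
  rw [← Complex.conj_mul' a]
  ring

lemma hyperbolicDeriv_blaschkeFactor {a z : ℂ} (ha : ‖a‖ < 1) (hz : ‖z‖ < 1) :
    hyperbolicDeriv (blaschkeFactor a) z = 1 := by
  have h := one_sub_conj_mul_ne_zero ha hz.le
  have ha' : 0 < 1 - ‖a‖ ^ 2 := by nlinarith [norm_nonneg a]
  have hz' : 0 < 1 - ‖z‖ ^ 2 := by nlinarith [norm_nonneg z]
  rw [hyperbolicDeriv, (hasDerivAt_blaschkeFactor h).deriv, one_sub_sq_norm_blaschkeFactor h,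
    norm_div, norm_pow, Complex.norm_real, Real.norm_of_nonneg ha'.le]
  field_simp

lemma HasDerivAt.eventually_mul_norm_sub_le {𝕜 F : Type*} [NontriviallyNormedField 𝕜]
    [NormedAddCommGroup F] [NormedSpace 𝕜 F] {f : 𝕜 → F} {f' : F} {x : 𝕜} {c : ℝ}
    (hf : HasDerivAt f f' x) (hc : c < ‖f'‖) :
    ∀ᶠ z in 𝓝 x, c * ‖z - x‖ ≤ ‖f z - f x‖ := by
  filter_upwards [(hasDerivAt_iff_isLittleO.mp hf).bound (sub_pos.mpr hc)] with z hz
  have := norm_sub_norm_le ((z - x) • f') (f z - f x)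
  rw [norm_sub_rev ((z - x) • f'), norm_smul] at this
  nlinarith [norm_nonneg (z - x)]

lemma norm_deriv_le_one_of_isLocalMax_hyperbolicDeriv {Θ : ℂ → ℂ}
    (hΘ : ∀ᶠ ζ in 𝓝 0, DifferentiableAt ℂ Θ ζ) (h0 : Θ 0 = 0)
    (hmax : IsLocalMax (hyperbolicDeriv Θ) 0) : ‖deriv Θ 0‖ ≤ 1 := by
  by_contra! hc
  set c := ‖deriv Θ 0‖
  obtain ⟨c', hc'1, hc'c⟩ := exists_between hc
  have hval : hyperbolicDeriv Θ 0 = c := by simp [hyperbolicDeriv, h0, c]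
  have hgrowth : ∀ᶠ ζ in 𝓝 0, c' * ‖ζ‖ ≤ ‖Θ ζ‖ := by
    simpa [h0] using hΘ.self_of_nhds.hasDerivAt.eventually_mul_norm_sub_le hc'c
  have hΘ1 : ∀ᶠ ζ in 𝓝 0, ‖Θ ζ‖ < 1 :=
    hΘ.self_of_nhds.continuousAt.norm.eventually_lt continuousAt_const (by simp [h0])
  obtain ⟨ε₀, hε₀, hball⟩ := Metric.eventually_nhds_iff_ball.mp
    (hΘ.and (hmax.and (hgrowth.and hΘ1)))
  obtain ⟨ε, hε, hεε₀, hε1⟩ : ∃ ε, 0 < ε ∧ ε < ε₀ ∧ ε < 1 := by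
    obtain ⟨ε, hε, hlt⟩ := exists_between (lt_min hε₀ one_pos)
    exact ⟨ε, hε, lt_min_iff.mp hlt⟩
  -- On the circle `|ζ| = ε`, the bound on the hyperbolic derivative and the growth of `Θ`
  -- force `|Θ'| < c`.
  have hsphere : ∀ ζ ∈ frontier (ball (0 : ℂ) ε),
      ‖deriv Θ ζ‖ ≤ c * (1 - c' ^ 2 * ε ^ 2) / (1 - ε ^ 2) := by
    intro ζ hζ
    rw [frontier_ball 0 hε.ne', mem_sphere_zero_iff_norm] at hζ
    obtain ⟨-, hle, hgr, hΘζ⟩ := hball ζ (by simpa [hζ])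
    rw [hval, hyperbolicDeriv, div_le_iff₀ (by nlinarith [norm_nonneg (Θ ζ)]), hζ] at hle
    rw [hζ] at hgr
    rw [le_div_iff₀ (by nlinarith)]
    nlinarith [mul_le_mul hgr hgr (by positivity) (norm_nonneg _)]
  have hdiff : DifferentiableOn ℂ Θ (ball 0 ε₀) := fun ζ hζ =>
    (hball ζ hζ).1.differentiableWithinAt
  have hmod : c ≤ c * (1 - c' ^ 2 * ε ^ 2) / (1 - ε ^ 2) :=
    Complex.norm_le_of_forall_mem_frontier_norm_le isBounded_ball
      ((hdiff.deriv isOpen_ball).diffContOnCl_ball (closedBall_subset_ball hεε₀))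
      hsphere (subset_closure (mem_ball_self hε))
  rw [le_div_iff₀ (by nlinarith)] at hmod
  nlinarith [mul_pos (mul_pos hε hε)
    (mul_pos (by linarith : 0 < c) (by nlinarith : 0 < c' ^ 2 - 1))]

lemma IsLocalMax.hyperbolicDeriv_le_one {Φ : ℂ → ℂ} {z₀ : ℂ}
    (hmax : IsLocalMax (hyperbolicDeriv Φ) z₀) (hΦ : ∀ᶠ z in 𝓝 z₀, DifferentiableAt ℂ Φ z)
    (hz₀ : ‖z₀‖ < 1) (hΦz₀ : ‖Φ z₀‖ < 1) : hyperbolicDeriv Φ z₀ ≤ 1 := by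
  set χ := blaschkeFactor (-z₀)
  set Θ := blaschkeFactor (Φ z₀) ∘ Φ ∘ χ
  have hχ0 : χ 0 = z₀ := by simp [χ, blaschkeFactor]
  have hχ : ContinuousAt χ 0 :=
    (hasDerivAt_blaschkeFactor (by simp)).continuousAt
  have hχz₀ : Tendsto χ (𝓝 0) (𝓝 z₀) := hχ0 ▸ hχ
  have hΦ1 : ∀ᶠ z in 𝓝 z₀, ‖Φ z‖ < 1 :=
    hΦ.self_of_nhds.continuousAt.norm.eventually_lt continuousAt_const hΦz₀
  have hz1 : ∀ᶠ z : ℂ in 𝓝 z₀, ‖z‖ < 1 :=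
    continuous_norm.continuousAt.eventually_lt continuousAt_const hz₀
  have hζ1 : ∀ᶠ ζ : ℂ in 𝓝 0, ‖ζ‖ < 1 :=
    continuous_norm.continuousAt.eventually_lt continuousAt_const (by simp)
  have hlocal : ∀ᶠ ζ in 𝓝 0, DifferentiableAt ℂ Θ ζ ∧
      hyperbolicDeriv Θ ζ = hyperbolicDeriv Φ (χ ζ) := by
    filter_upwards [hχz₀.eventually (hΦ.and (hΦ1.and hz1)), hζ1]
      with ζ ⟨hΦd, hΦζ, hχζ⟩ hζ
    have hχd : DifferentiableAt ℂ χ ζ :=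
      (hasDerivAt_blaschkeFactor (one_sub_conj_mul_ne_zero (by simpa using hz₀) hζ.le))
        |>.differentiableAt
    have hBd : DifferentiableAt ℂ (blaschkeFactor (Φ z₀)) (Φ (χ ζ)) :=
      (hasDerivAt_blaschkeFactor (one_sub_conj_mul_ne_zero hΦz₀ hΦζ.le)).differentiableAt
    refine ⟨hBd.comp ζ (hΦd.comp ζ hχd), ?_⟩
    rw [hyperbolicDeriv_comp (φ := Φ ∘ χ) hBd (hΦd.comp ζ hχd) hΦζ.ne, Function.comp_apply,
      hyperbolicDeriv_blaschkeFactor hΦz₀ hΦζ, hyperbolicDeriv_comp hΦd hχd hχζ.ne,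
      hyperbolicDeriv_blaschkeFactor (by simpa using hz₀) hζ, one_mul, mul_one]
  have hΘmax : IsLocalMax (hyperbolicDeriv Θ) 0 :=
    (hχ0 ▸ hmax).comp_continuous hχ |>.congr (hlocal.mono fun ζ h => h.2.symm)
  have hΘ0 : Θ 0 = 0 := by simp [Θ, hχ0, blaschkeFactor]
  calc hyperbolicDeriv Φ z₀ = hyperbolicDeriv Θ 0 := by rw [hlocal.self_of_nhds.2, hχ0]
    _ = ‖deriv Θ 0‖ := by simp [hyperbolicDeriv, hΘ0]
    _ ≤ 1 := norm_deriv_le_one_of_isLocalMax_hyperbolicDeriv (hlocal.mono fun ζ h => h.1)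
        hΘ0 hΘmax

noncomputable def cayley (L : ℂ) : ℂ := (L + 1) / (L - 1)

lemma sub_one_ne_zero_of_re_neg {L : ℂ} (hL : L.re < 0) : L - 1 ≠ 0 := fun h => by
  rw [sub_eq_zero.mp h, one_re] at hL
  norm_num at hL

lemma one_sub_sq_norm_cayley {L : ℂ} (hL : L.re < 0) :
    1 - ‖cayley L‖ ^ 2 = -4 * L.re / ‖L - 1‖ ^ 2 := by
  have hpos : ‖L - 1‖ ^ 2 ≠ 0 := by have := sub_one_ne_zero_of_re_neg hL; positivity
  rw [cayley, norm_div, div_pow, eq_div_iff hpos, sub_mul, div_mul_cancel₀ _ hpos]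
  simp only [Complex.sq_norm, normSq_apply, add_re, add_im, sub_re, sub_im, one_re, one_im]
  ring

lemma norm_cayley_lt_one {L : ℂ} (hL : L.re < 0) : ‖cayley L‖ < 1 := by
  have : 0 < 1 - ‖cayley L‖ ^ 2 := by
    rw [one_sub_sq_norm_cayley hL]
    have := sub_one_ne_zero_of_re_neg hL
    exact div_pos (by linarith) (by positivity)
  nlinarith [norm_nonneg (cayley L)]

lemma hasDerivAt_cayley {L : ℂ} (hL : L - 1 ≠ 0) : HasDerivAt cayley (-2 / (L - 1) ^ 2) L := by
  refine (((hasDerivAt_id L).add_const 1).div ((hasDerivAt_id L).sub_const 1) hL).congr_deriv ?_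
  simp only [id]
  field_simp
  ring

lemma hyperbolicDeriv_cayley_comp {ℓ : ℂ → ℂ} {ℓ' z : ℂ} (hℓ : HasDerivAt ℓ ℓ' z)
    (hre : (ℓ z).re < 0) :
    hyperbolicDeriv (cayley ∘ ℓ) z = ‖ℓ'‖ * (1 - ‖z‖ ^ 2) / (-2 * (ℓ z).re) := by
  have hne := sub_one_ne_zero_of_re_neg hre
  have hpos : 0 < ‖ℓ z - 1‖ := norm_pos_iff.mpr hne
  rw [hyperbolicDeriv, ((hasDerivAt_cayley hne).comp z hℓ).deriv, Function.comp_apply,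
    one_sub_sq_norm_cayley hre, norm_mul, norm_div, norm_neg, norm_pow, Complex.norm_ofNat]
  field_simp
  ring

/-- The density of the hyperbolic metric of the punctured disc `0 < |w| < ρ`, as a function of
`t = |w|`, normalised like the density `(1 - |z|²)⁻¹` of `𝔻`. -/
noncomputable def puncturedDiskDensity (ρ t : ℝ) : ℝ := (2 * t * Real.log (ρ / t))⁻¹

lemma exists_hyperbolicDeriv_eventuallyEq {h : ℂ → ℂ} {z₀ : ℂ} {ρ : ℝ}
    (hh : ∀ᶠ z in 𝓝 z₀, DifferentiableAt ℂ h z) (h0 : h z₀ ≠ 0) (hρ : ‖h z₀‖ < ρ) :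
    ∃ Φ : ℂ → ℂ, (∀ᶠ z in 𝓝 z₀, DifferentiableAt ℂ Φ z) ∧ ‖Φ z₀‖ < 1 ∧
      hyperbolicDeriv Φ =ᶠ[𝓝 z₀]
        fun z => puncturedDiskDensity ρ ‖h z‖ * ‖deriv h z‖ * (1 - ‖z‖ ^ 2) := by
  -- `Φ = cayley ∘ log (h / ρ)` lifts `h` through the universal covering `ζ ↦ ρ exp (cayley ζ)`
  -- of the punctured disc `0 < |w| < ρ` by `𝔻`; `cayley` is an involution exchanging `𝔻` and
  -- the left half-plane.
  set ℓ : ℂ → ℂ := fun z => (Real.log (‖h z₀‖ / ρ) : ℂ) + log (h z / h z₀)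
  have hcont : ContinuousAt h z₀ := hh.self_of_nhds.continuousAt
  have hslit : ∀ᶠ z in 𝓝 z₀, h z / h z₀ ∈ slitPlane :=
    (hcont.div_const _).eventually_mem (isOpen_slitPlane.mem_nhds (by simp [h0]))
  have hsmall : ∀ᶠ z in 𝓝 z₀, ‖h z‖ < ρ := hcont.norm.eventually_lt continuousAt_const hρ
  have hnz : ∀ᶠ z in 𝓝 z₀, h z ≠ 0 := hcont.eventually_ne h0
  have hρ0 : 0 < ρ := (norm_nonneg _).trans_lt hρ
  have hlocal : ∀ᶠ z in 𝓝 z₀, HasDerivAt ℓ (deriv h z / h z) z ∧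
      (ℓ z).re = Real.log (‖h z‖ / ρ) ∧ (ℓ z).re < 0 := by
    filter_upwards [hh, hslit, hsmall, hnz] with z hd hs hlt hz
    have hd' : HasDerivAt ℓ (deriv h z / h z) z := by
      refine ((hd.hasDerivAt.div_const (h z₀)).clog hs |>.const_add _).congr_deriv ?_
      field_simp
    have hre : (ℓ z).re = Real.log (‖h z‖ / ρ) := by
      simp only [ℓ, add_re, ofReal_re, log_re, norm_div]
      rw [Real.log_div (by positivity) (by positivity), Real.log_div (norm_ne_zero_iff.mpr hz)
        (by positivity), Real.log_div (by positivity) hρ0.ne']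
      ring
    refine ⟨hd', hre, hre ▸ Real.log_neg (by positivity) ((div_lt_one hρ0).mpr hlt)⟩
  refine ⟨cayley ∘ ℓ, ?_, norm_cayley_lt_one hlocal.self_of_nhds.2.2, ?_⟩
  · filter_upwards [hlocal] with z ⟨hd, _, hneg⟩
    exact ((hasDerivAt_cayley (sub_one_ne_zero_of_re_neg hneg)).comp z hd).differentiableAt
  · filter_upwards [hlocal, hnz] with z ⟨hd, hre, hneg⟩ hz
    rw [hyperbolicDeriv_cayley_comp hd hneg, hre, puncturedDiskDensity, norm_div,
      ← inv_div ‖h z‖ ρ, Real.log_inv]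
    field_simp

lemma IsLocalMax.puncturedDiskDensity_mul_le_one {h : ℂ → ℂ} {z₀ : ℂ} {ρ : ℝ}
    (hmax : IsLocalMax (fun z => puncturedDiskDensity ρ ‖h z‖ * ‖deriv h z‖ * (1 - ‖z‖ ^ 2)) z₀)
    (hh : ∀ᶠ z in 𝓝 z₀, DifferentiableAt ℂ h z) (hz₀ : ‖z₀‖ < 1) (h0 : h z₀ ≠ 0)
    (hρ : ‖h z₀‖ < ρ) :
    puncturedDiskDensity ρ ‖h z₀‖ * ‖deriv h z₀‖ * (1 - ‖z₀‖ ^ 2) ≤ 1 := by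
  obtain ⟨Φ, hΦ, hΦz₀, hΦeq⟩ := exists_hyperbolicDeriv_eventuallyEq hh h0 hρ
  exact hΦeq.self_of_nhds.symm.le.trans <|
    (hmax.congr hΦeq.symm).hyperbolicDeriv_le_one hΦ hz₀ hΦz₀

lemma puncturedDiskDensity_exp_one_mul_self {r : ℝ} (hr : r ≠ 0) :
    puncturedDiskDensity (Real.exp 1 * r) r = (2 * r)⁻¹ := by
  rw [puncturedDiskDensity, mul_div_cancel_right₀ _ hr, Real.log_exp, mul_one]

lemma one_le_log_exp_one_mul_div {r t : ℝ} (ht : t ∈ Ioc 0 r) :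
    1 ≤ Real.log (Real.exp 1 * r / t) := by
  rw [mul_div_assoc, Real.log_mul (Real.exp_ne_zero 1) (div_pos (ht.1.trans_le ht.2) ht.1).ne',
    Real.log_exp, le_add_iff_nonneg_right]
  exact Real.log_nonneg ((one_le_div ht.1).mpr ht.2)

lemma puncturedDiskDensity_antitoneOn (r : ℝ) :
    AntitoneOn (puncturedDiskDensity (Real.exp 1 * r)) (Ioc 0 r) := by
  intro s hs t ht hst
  have hr : 0 < r := hs.1.trans_le hs.2
  have ht1 := one_le_log_exp_one_mul_div ht
  -- `t log(er/t) - s log(er/s) = (t - s) log(er/t) + s log(s/t) ≥ (t - s) + (s - t)`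
  have hlog : Real.log (Real.exp 1 * r / t) - Real.log (Real.exp 1 * r / s)
      = Real.log (s / t) := by
    rw [← Real.log_div (by have := ht.1; positivity) (by have := hs.1; positivity)]
    congr 1
    field_simp
  have hst' : s - t ≤ s * Real.log (s / t) := by
    have := Real.one_sub_inv_le_log_of_pos (div_pos hs.1 ht.1)
    rw [inv_div] at this
    calc s - t = s * (1 - t / s) := by field_simp [hs.1.ne']
      _ ≤ s * Real.log (s / t) := mul_le_mul_of_nonneg_left this hs.1.le
  rw [← hlog] at hst'
  exact inv_anti₀
    (mul_pos (mul_pos two_pos hs.1) (one_pos.trans_le (one_le_log_exp_one_mul_div hs)))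
    (by nlinarith [mul_nonneg (sub_nonneg.mpr hst) (sub_nonneg.mpr ht1)])

lemma continuousOn_puncturedDiskDensity (ρ : ℝ) :
    ContinuousOn (puncturedDiskDensity ρ) (Ioo 0 ρ) := by
  intro t ht
  have hρt : ρ / t ≠ 0 := (div_pos (ht.1.trans ht.2) ht.1).ne'
  have hden : 2 * t * Real.log (ρ / t) ≠ 0 :=
    (mul_pos (mul_pos two_pos ht.1) (Real.log_pos ((one_lt_div ht.1).mpr ht.2))).ne'
  have ht0 : t ≠ 0 := ht.1.ne'
  unfold puncturedDiskDensity
  apply ContinuousAt.continuousWithinAt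
  fun_prop (disch := assumption)

lemma IsLocalMax.puncturedDiskDensity_infDist_mul_le_one {h : ℂ → ℂ} {K : Set ℂ} {r : ℝ}
    {z₀ : ℂ}
    (hmax : IsLocalMax (fun z => puncturedDiskDensity (Real.exp 1 * r) (infDist (h z) K) *
      ‖deriv h z‖ * (1 - ‖z‖ ^ 2)) z₀)
    (hh : ∀ᶠ z in 𝓝 z₀, DifferentiableAt ℂ h z) (hz₀ : ‖z₀‖ < 1) (hK : IsClosed K)
    (hD : infDist (h z₀) K ∈ Ioo 0 r) :
    puncturedDiskDensity (Real.exp 1 * r) (infDist (h z₀) K) * ‖deriv h z₀‖ *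
      (1 - ‖z₀‖ ^ 2) ≤ 1 := by
  have hKne : K.Nonempty := by
    by_contra hK'
    simp [not_nonempty_iff_eq_empty.mp hK'] at hD
  obtain ⟨p, hp, hdist⟩ := hK.exists_infDist_eq_dist hKne (h z₀)
  have hcont : ContinuousAt h z₀ := hh.self_of_nhds.continuousAt
  -- Comparing with the punctured disc centred at a nearest omitted point `p` only decreases
  -- the density, with equality at `z₀`.
  have hcompare : ∀ᶠ z in 𝓝 z₀,
      puncturedDiskDensity (Real.exp 1 * r) ‖h z - p‖ * ‖deriv (fun w => h w - p) z‖ *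
        (1 - ‖z‖ ^ 2) ≤
      puncturedDiskDensity (Real.exp 1 * r) (infDist (h z) K) * ‖deriv h z‖ * (1 - ‖z‖ ^ 2) := by
    have hpos : ∀ᶠ z in 𝓝 z₀, 0 < infDist (h z) K :=
      continuousAt_const.eventually_lt ((continuous_infDist_pt K).continuousAt.comp hcont) hD.1
    have hnear : ∀ᶠ z in 𝓝 z₀, ‖h z - p‖ < r :=
      (hcont.sub continuousAt_const).norm.eventually_lt continuousAt_const
        (show ‖h z₀ - p‖ < r by rw [← dist_eq_norm, ← hdist]; exact hD.2)
    have hz1 : ∀ᶠ z : ℂ in 𝓝 z₀, ‖z‖ < 1 :=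
      continuous_norm.continuousAt.eventually_lt continuousAt_const hz₀
    filter_upwards [hpos, hnear, hz1] with z hpos hnear hz1
    have hle : infDist (h z) K ≤ ‖h z - p‖ := dist_eq_norm (h z) p ▸ infDist_le_dist_of_mem hp
    rw [deriv_sub_const]
    gcongr
    · nlinarith [norm_nonneg z]
    · exact puncturedDiskDensity_antitoneOn r ⟨hpos, hle.trans hnear.le⟩
        ⟨hpos.trans_le hle, hnear.le⟩ hle
  have hmax' : IsLocalMax (fun z => puncturedDiskDensity (Real.exp 1 * r) ‖h z - p‖ *
      ‖deriv (fun w => h w - p) z‖ * (1 - ‖z‖ ^ 2)) z₀ := by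
    filter_upwards [hcompare, hmax] with z h₁ h₂
    simpa [deriv_sub_const, ← dist_eq_norm, ← hdist] using h₁.trans h₂
  have h0 : h z₀ - p ≠ 0 := by
    rw [sub_ne_zero]
    rintro rfl
    exact (hD.1.trans_le (infDist_le_dist_of_mem hp)).ne' (dist_self _)
  simpa [deriv_sub_const, ← dist_eq_norm, ← hdist] using
    hmax'.puncturedDiskDensity_mul_le_one (hh.mono fun z hz => hz.sub_const p) hz₀ h0
      (by
        rw [← dist_eq_norm, ← hdist]
        exact hD.2.trans (lt_mul_of_one_lt_left (hD.1.trans hD.2)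
          (Real.one_lt_exp_iff.mpr one_pos)))

theorem norm_deriv_zero_le_of_infDist_lt {h : ℂ → ℂ} {K : Set ℂ} {r : ℝ}
    (hh : ∀ᶠ z in 𝓝ˢ (closedBall 0 1), DifferentiableAt ℂ h z) (hK : IsClosed K)
    (hKne : K.Nonempty) (hmaps : MapsTo h (closedBall 0 1) Kᶜ)
    (hr : ∀ z ∈ closedBall 0 1, infDist (h z) K < r) :
    ‖deriv h 0‖ ≤ 2 * r := by
  set F : ℂ → ℝ := fun z =>
    puncturedDiskDensity (Real.exp 1 * r) (infDist (h z) K) * ‖deriv h z‖ * (1 - ‖z‖ ^ 2)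
  have hD : ∀ z ∈ closedBall (0 : ℂ) 1, infDist (h z) K ∈ Ioo 0 r :=
    fun z hz => ⟨(hK.notMem_iff_infDist_pos hKne).mp (hmaps hz), hr z hz⟩
  have hr0 : 0 < r := (hD 0 (by simp)).1.trans (hD 0 (by simp)).2
  obtain ⟨U, hUo, hU, hUd⟩ := mem_nhdsSet_iff_exists.mp hh
  have hFc : ContinuousOn F (closedBall 0 1) := by
    refine ContinuousOn.mul (ContinuousOn.mul ?_ ?_) (by fun_prop)
    · refine (continuousOn_puncturedDiskDensity _).comp
        ((continuous_infDist_pt K).comp_continuousOn ?_) fun z hz => ?_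
      · exact fun z hz => (hUd (hU hz)).continuousAt.continuousWithinAt
      · exact ⟨(hD z hz).1, (hD z hz).2.trans (lt_mul_of_one_lt_left hr0
          (Real.one_lt_exp_iff.mpr one_pos))⟩
    · exact ((DifferentiableOn.deriv (fun z hz => (hUd hz).differentiableWithinAt) hUo)
        |>.continuousOn.mono hU).norm
  obtain ⟨zs, hzs, hmax⟩ := (isCompact_closedBall (0 : ℂ) 1).exists_isMaxOn
    ⟨0, by simp⟩ hFc
  have hFzs : F zs ≤ 1 := by
    rcases (mem_closedBall_zero_iff.mp hzs).lt_or_eq with hlt | heq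
    · exact (hmax.isLocalMax (closedBall_mem_nhds_of_mem (by simpa using hlt)))
        |>.puncturedDiskDensity_infDist_mul_le_one
          (hh.filter_mono (nhds_le_nhdsSet hzs)) hlt hK (hD zs hzs)
    · simp [F, heq]
  have hF0 : (2 * r)⁻¹ * ‖deriv h 0‖ ≤ F 0 := by
    have hD0 := hD 0 (by simp)
    have := puncturedDiskDensity_antitoneOn r ⟨hD0.1, hD0.2.le⟩ ⟨hr0, le_rfl⟩ hD0.2.le
    rw [puncturedDiskDensity_exp_one_mul_self hr0.ne'] at this
    simpa [F] using mul_le_mul_of_nonneg_right this (norm_nonneg (deriv h 0))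
  calc ‖deriv h 0‖ = 2 * r * ((2 * r)⁻¹ * ‖deriv h 0‖) := by field_simp
    _ ≤ 2 * r * F zs := by gcongr; exact hF0.trans (hmax (by simp))
    _ ≤ 2 * r := by nlinarith

lemma isOpen_image_of_deriv_ne_zero {f : ℂ → ℂ} {U : Set ℂ} {z : ℂ}
    (hf : DifferentiableOn ℂ f U) (hU : IsOpen U) (hUc : IsPreconnected U) (hz : z ∈ U)
    (hderiv : deriv f z ≠ 0) : IsOpen (f '' U) := by
  rcases (hf.analyticOnNhd hU).is_constant_or_isOpen hUc with ⟨w, hw⟩ | hopen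
  · have hconst : f =ᶠ[𝓝 z] fun _ => w := eventually_of_mem (hU.mem_nhds hz) hw
    exact absurd (by rw [hconst.deriv_eq, deriv_const]) hderiv
  · exact hopen U subset_rfl hU

lemma mapsTo_mul_closedBall_ball {s : ℂ} (hs : ‖s‖ < 1) :
    MapsTo (s * ·) (closedBall 0 1) (ball 0 1) := fun z hz => by
  rw [mem_closedBall_zero_iff] at hz
  rw [mem_ball_zero_iff, norm_mul]
  nlinarith [norm_nonneg s, norm_nonneg z]

lemma DifferentiableOn.eventually_differentiableAt_comp_mul {f : ℂ → ℂ}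
    (hf : DifferentiableOn ℂ f (ball 0 1)) {s : ℂ} (hs : ‖s‖ < 1) :
    ∀ᶠ z in 𝓝ˢ (closedBall 0 1), DifferentiableAt ℂ (fun z => f (s * z)) z := by
  refine eventually_of_mem ((isOpen_ball.preimage (continuous_const_mul s)).mem_nhdsSet.mpr
    (mapsTo_mul_closedBall_ball hs)) fun z hz => ?_
  exact (hf.differentiableAt (isOpen_ball.mem_nhds hz)).comp z (differentiableAt_id.const_mul _)

theorem landau_theorem_general (f : ℂ → ℂ)
    (hf : DifferentiableOn ℂ f (Metric.ball 0 1))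
    (hderiv : ‖deriv f 0‖ = 1)
    (R : ℝ) (hR0 : 0 < R) (hR : R < 1 / 2) :
    ∃ z₀ : ℂ, Metric.ball z₀ R ⊆ f '' Metric.ball 0 1 := by
  by_contra! hnot
  set Ω := f '' ball 0 1
  have hclose : ∀ w, infDist w Ωᶜ < R := fun w => by
    obtain ⟨q, hq, hqΩ⟩ := not_subset.mp (hnot w)
    exact (infDist_le_dist_of_mem hqΩ).trans_lt (mem_ball'.mp hq)
  have hΩ : IsOpen Ω := isOpen_image_of_deriv_ne_zero hf isOpen_ball
    (convex_ball 0 1).isPreconnected (mem_ball_self one_pos) (by simp [← norm_ne_zero_iff, hderiv])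
  obtain ⟨q, -, hq⟩ := not_subset.mp (hnot 0)
  obtain ⟨s, hRs, hs1⟩ := exists_between (show 2 * R < 1 by linarith)
  have hs : ‖(s : ℂ)‖ = s := by rw [norm_real, Real.norm_of_nonneg (by linarith)]
  have hs1' : ‖(s : ℂ)‖ < 1 := by rwa [hs]
  have := norm_deriv_zero_le_of_infDist_lt (hf.eventually_differentiableAt_comp_mul hs1')
    hΩ.isClosed_compl ⟨q, hq⟩
    (fun z hz => not_not.mpr (mem_image_of_mem f (mapsTo_mul_closedBall_ball hs1' hz)))
    (fun z _ => hclose _)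
  rw [deriv_comp_mul_left, norm_smul, mul_zero, hderiv, hs, mul_one] at this
  linarith

/-- **Landau's theorem with bound `L ≥ 1/2`.** If `f` is continuous on the closed unit
disc, holomorphic on the open unit disc and `|f'(0)| = 1`, then for every `0 < R < 1/2`
the image `f(𝔻)` contains an open disc of radius `R`. -/
theorem landau_theorem (f : ℂ → ℂ)
    (hc : ContinuousOn f (Metric.closedBall 0 1))
    (hf : DifferentiableOn ℂ f (Metric.ball 0 1))
    (hderiv : ‖deriv f 0‖ = 1)
    (R : ℝ) (hR0 : 0 < R) (hR : R < 1 / 2) :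
    ∃ z₀ : ℂ, Metric.ball z₀ R ⊆ f '' Metric.ball 0 1 :=
  landau_theorem_general f hf hderiv R hR0 hR
end
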